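/- Let X be a set of 120 unit vectors in ℝ^8 obtained by choosing one vector from each antipodal pair of the E_8 root system (rescaled to unit length). Then the relations R_i = {(x,y) ∈ X × X : ⟨x,y⟩ = 1 - i/2} for i = 0,1,2,3 do NOT form a (symmetric) association scheme on X. -/

import Mathlib

open scoped Classical

/-- The root system `E_8` in `ℝ^8` (240 vectors of squared norm 2). -/
def rootsE8 : Set (Fin 8 → ℝ) :=
  {v | ∃ i j : Fin 8, i < j ∧
    (v = Pi.single i 1 + Pi.single j (1 : ℝ) ∨
     v = Pi.single i 1 - Pi.single j (1 : ℝ) ∨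
     v = -(Pi.single i 1 + Pi.single j (1 : ℝ)) ∨
     v = -(Pi.single i 1 - Pi.single j (1 : ℝ)))} ∪
  {v | ∃ c : Fin 8 → ℝ, (∀ i, c i = 1 ∨ c i = -1) ∧ (∏ i, c i) = 1 ∧
    v = (1 / 2 : ℝ) • c}

def dot (x y : Fin 8 → ℝ) : ℝ := ∑ i, x i * y i

/-!
Let `s = (√2)⁻¹`. If `x = s • w₁` and `y = s • w₂` are unit vectors of `X` with `⟨x, y⟩ = 1/2`,
the only unit vector `z` with `⟨z, x⟩ = 1/2` and `⟨z, y⟩ = -1/2` is `x - y`, and the only one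
with the roles of `x` and `y` exchanged is `y - x = -(x - y)`. When `w₁ - w₂` is a root, exactly
one of these two lies in `X`, so the number of such `z` depends on the order of `x` and `y`,
although both ordered pairs lie in the same relation. Such a pair exists in every half: among the
seven roots `e₀ + eᵢ`, pairwise at inner product `1`, two are represented in `X` with the same
sign.
-/

open Matrix

section UnitVectors

variable {ι : Type*} [Fintype ι]

lemma eq_sub_of_dotProduct_eq {x y z : ι → ℝ} (hx : x ⬝ᵥ x = 1) (hy : y ⬝ᵥ y = 1)
    (hxy : x ⬝ᵥ y = 1 / 2) (hz : z ⬝ᵥ z = 1) (hzx : z ⬝ᵥ x = 1 / 2) (hzy : z ⬝ᵥ y = -1 / 2) :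
    z = x - y := by
  rw [← sub_eq_zero, ← dotProduct_self_eq_zero]
  simp only [sub_dotProduct, dotProduct_sub, dotProduct_comm x z, dotProduct_comm y z,
    dotProduct_comm y x]
  linarith

lemma filter_dotProduct_eq_filter_eq_sub {X : Finset (ι → ℝ)} (hX : ∀ v ∈ X, v ⬝ᵥ v = 1)
    {x y : ι → ℝ} (hx : x ∈ X) (hy : y ∈ X) (hxy : x ⬝ᵥ y = 1 / 2) :
    X.filter (fun z => z ⬝ᵥ x = 1 / 2 ∧ z ⬝ᵥ y = -1 / 2) = X.filter (· = x - y) := by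
  ext z
  simp only [Finset.mem_filter, and_congr_right_iff]
  intro hz
  constructor
  · exact fun ⟨hzx, hzy⟩ => eq_sub_of_dotProduct_eq (hX x hx) (hX y hy) hxy (hX z hz) hzx hzy
  · rintro rfl
    simp only [sub_dotProduct, hX x hx, hX y hy, hxy, dotProduct_comm y x]
    norm_num

lemma card_filter_dotProduct_ne_swap {X : Finset (ι → ℝ)} (hX : ∀ v ∈ X, v ⬝ᵥ v = 1)
    {x y : ι → ℝ} (hx : x ∈ X) (hy : y ∈ X) (hxy : x ⬝ᵥ y = 1 / 2)
    (hswap : x - y ∈ X ↔ y - x ∉ X) :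
    (X.filter fun z => z ⬝ᵥ x = 1 / 2 ∧ z ⬝ᵥ y = -1 / 2).card ≠
      (X.filter fun z => z ⬝ᵥ y = 1 / 2 ∧ z ⬝ᵥ x = -1 / 2).card := by
  rw [filter_dotProduct_eq_filter_eq_sub hX hx hy hxy,
    filter_dotProduct_eq_filter_eq_sub hX hy hx (by rwa [dotProduct_comm]),
    Finset.filter_eq', Finset.filter_eq']
  by_cases h : y - x ∈ X <;> simp [h, hswap]

end UnitVectors

lemma inv_sqrt_two_smul_dotProduct {ι : Type*} [Fintype ι] (v w : ι → ℝ) :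
    ((√2)⁻¹ • v) ⬝ᵥ ((√2)⁻¹ • w) = v ⬝ᵥ w / 2 := by
  rw [smul_dotProduct, dotProduct_smul, smul_eq_mul, smul_eq_mul, ← mul_assoc, ← mul_inv,
    Real.mul_self_sqrt zero_le_two, inv_mul_eq_div]

lemma single_add_single_mem_rootsE8 {i j : Fin 8} (h : i ≠ j) :
    Pi.single i 1 + Pi.single j (1 : ℝ) ∈ rootsE8 := by
  rcases h.lt_or_gt with h | h
  · exact Or.inl ⟨i, j, h, Or.inl rfl⟩
  · exact Or.inl ⟨j, i, h, Or.inl (add_comm _ _)⟩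

lemma single_sub_single_mem_rootsE8 {i j : Fin 8} (h : i ≠ j) :
    Pi.single i 1 - Pi.single j (1 : ℝ) ∈ rootsE8 := by
  rcases h.lt_or_gt with h | h
  · exact Or.inl ⟨i, j, h, Or.inr (Or.inl rfl)⟩
  · exact Or.inl ⟨j, i, h, Or.inr (Or.inr (Or.inr (neg_sub _ _).symm))⟩

lemma dotProduct_self_of_mem_rootsE8 {w : Fin 8 → ℝ} (hw : w ∈ rootsE8) : w ⬝ᵥ w = 2 := by
  rcases hw with ⟨i, j, hij, hw⟩ | ⟨c, hc, -, rfl⟩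
  · rcases hw with rfl | rfl | rfl | rfl <;>
      simp [dotProduct_add, dotProduct_sub, hij.ne, hij.ne', one_add_one_eq_two]
  have hcc : ∀ i, c i * c i = 1 := fun i => by rcases hc i with h | h <;> simp [h]
  rw [smul_dotProduct, dotProduct_smul]
  simp [dotProduct, hcc]
  norm_num

lemma exists_dotProduct_eq_one_sub_mem_rootsE8 {X : Finset (Fin 8 → ℝ)}
    (hX : ∀ w ∈ rootsE8, ((√2)⁻¹ • w ∈ X ↔ -((√2)⁻¹ • w) ∉ X)) :
    ∃ w₁ w₂ : Fin 8 → ℝ, w₁ ⬝ᵥ w₂ = 1 ∧ w₁ - w₂ ∈ rootsE8 ∧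
      (√2)⁻¹ • w₁ ∈ X ∧ (√2)⁻¹ • w₂ ∈ X := by
  let r : {i : Fin 8 // i ≠ 0} → Fin 8 → ℝ := fun i => Pi.single 0 1 + Pi.single (i : Fin 8) 1
  obtain ⟨i, j, hij, hsame⟩ :=
    Fintype.exists_ne_map_eq_of_card_lt (fun i => (√2)⁻¹ • r i ∈ X) (by simp)
  have hij' : (i : Fin 8) ≠ j := Subtype.coe_ne_coe.mpr hij
  have hdot : r i ⬝ᵥ r j = 1 := by
    simp [r, dotProduct_add, hij', j.2, i.2.symm]
  have hsub : ∀ {k l : {i : Fin 8 // i ≠ 0}}, (k : Fin 8) ≠ l → r k - r l ∈ rootsE8 :=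
    fun hkl => by simpa [r] using single_sub_single_mem_rootsE8 hkl
  by_cases hi : (√2)⁻¹ • r i ∈ X
  · exact ⟨r i, r j, hdot, hsub hij', hi, hsame ▸ hi⟩
  · have hneg : ∀ k, (√2)⁻¹ • r k ∉ X → (√2)⁻¹ • -r k ∈ X := fun k hk => by
      rw [smul_neg]
      by_contra h
      exact hk ((hX _ (single_add_single_mem_rootsE8 k.2.symm)).mpr h)
    refine ⟨-r i, -r j, by simpa using hdot, ?_, hneg i hi, hneg j (hsame ▸ hi)⟩
    rw [neg_sub_neg]
    exact hsub hij'.symm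

/-- For any half `X` of the normalized `E_8` root system (one unit vector from
each antipodal pair), the relations `R_i = {(x,y) : ⟨x,y⟩ = 1 - i/2}`,
`i = 0,1,2,3`, do not form an association scheme on `X`: the intersection
numbers `p_{ij}^k` are not well defined. -/
theorem stmt_14 (X : Finset (Fin 8 → ℝ))
    (hX1 : ∀ v ∈ X, ∃ w ∈ rootsE8, v = (Real.sqrt 2)⁻¹ • w)
    (hX2 : ∀ w ∈ rootsE8, ((Real.sqrt 2)⁻¹ • w ∈ X ↔ -((Real.sqrt 2)⁻¹ • w) ∉ X)) :
    ¬ (∀ a ∈ ({1, 1/2, 0, -1/2} : Set ℝ), ∀ b ∈ ({1, 1/2, 0, -1/2} : Set ℝ),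
        ∀ c ∈ ({1, 1/2, 0, -1/2} : Set ℝ),
        ∀ x ∈ X, ∀ y ∈ X, ∀ x' ∈ X, ∀ y' ∈ X,
        dot x y = c → dot x' y' = c →
        (X.filter fun z => dot z x = a ∧ dot z y = b).card =
          (X.filter fun z => dot z x' = a ∧ dot z y' = b).card) := by
  intro H
  obtain ⟨w₁, w₂, hw, hsub, h₁, h₂⟩ := exists_dotProduct_eq_one_sub_mem_rootsE8 hX2
  have hunit : ∀ v ∈ X, v ⬝ᵥ v = 1 := fun v hv => by
    obtain ⟨w, hw, rfl⟩ := hX1 v hv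
    rw [inv_sqrt_two_smul_dotProduct, dotProduct_self_of_mem_rootsE8 hw, div_self two_ne_zero]
  have hxy : (√2)⁻¹ • w₁ ⬝ᵥ (√2)⁻¹ • w₂ = 1 / 2 := by rw [inv_sqrt_two_smul_dotProduct, hw]
  have hswap : (√2)⁻¹ • w₁ - (√2)⁻¹ • w₂ ∈ X ↔ (√2)⁻¹ • w₂ - (√2)⁻¹ • w₁ ∉ X := by
    rw [← smul_sub, ← smul_sub, ← neg_sub w₁ w₂, smul_neg]
    exact hX2 _ hsub
  refine card_filter_dotProduct_ne_swap hunit h₁ h₂ hxy hswap ?_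
  have hyx : (√2)⁻¹ • w₂ ⬝ᵥ (√2)⁻¹ • w₁ = 1 / 2 := by rwa [dotProduct_comm]
  exact H (1 / 2) (by simp) (-1 / 2) (by simp) (1 / 2) (by simp) _ h₁ _ h₂ _ h₂ _ h₁ hxy hyx
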